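/- Let k ≥ 1, n ≥ 1, and let ω = (ω₁, ω₂, …) be a sequence of integers. Let H₋ be the n×n Hessenberg matrix over ℤ[t₁,…,t_k] with entries (H₋)_{i,j} = t_{i−j+1} for 1 ≤ j ≤ i ≤ n−1, (H₋)_{i,i+1} = −1 for 1 ≤ i ≤ n−1, (H₋)_{n,j} = ω_{n−j+1}·t_{n−j+1} for 1 ≤ j ≤ n, and all other entries 0. Then det H₋ = P_{ω,k,n}. -/

import Mathlib

open Finset MvPolynomial

/-- The set of partitions `α ⊢ n` with parts at most `k`, encoded as tuples
`α = (α₁, …, α_k) ∈ ℕ^k` (0-indexed) with `∑ j, (j+1)·α_j = n`. -/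
def partitions (k n : ℕ) : Finset (Fin k → ℕ) :=
  (Fintype.piFinset fun _ : Fin k => Finset.range (n + 1)).filter
    fun α => ∑ j : Fin k, (j.1 + 1) * α j = n

/-- The variable `t_{m+1}` of `ℚ[t₁,…,t_k]` (0-indexed), with the convention
`t_j = 0` for `j > k`. -/
noncomputable def tQ (k m : ℕ) : MvPolynomial (Fin k) ℚ :=
  if h : m < k then X ⟨m, h⟩ else 0

/-- The weighted isobaric polynomial with weight vector `ω` (0-indexed, so
`ω 0 = ω₁`): `P_{ω,k,n} = ∑_{α ⊢ n} (|α|!/(α₁!⋯α_k!))·((∑ᵢ αᵢωᵢ)/|α|)·t^α`.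
Its coefficients are integers; it is written here in `ℚ[t₁,…,t_k]`. -/
noncomputable def P (k : ℕ) (ω : ℕ → ℤ) (n : ℕ) : MvPolynomial (Fin k) ℚ :=
  ∑ α ∈ partitions k n,
    C ((Nat.multinomial Finset.univ α : ℚ) *
        ((∑ i : Fin k, (α i : ℚ) * (ω i.1 : ℚ)) / ((∑ i, α i : ℕ) : ℚ))) *
      ∏ j, X j ^ α j

/-- The `n×n` Hessenberg matrix `H₋` (0-indexed): rows `1 ≤ i ≤ n-1` (1-based)
have `t_{i-j+1}` for `j ≤ i` and `-1` on the superdiagonal; the last row has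
entries `ω_{n-j+1}·t_{n-j+1}`; all other entries are `0`. -/
noncomputable def Hminus (k n : ℕ) (ω : ℕ → ℤ) :
    Matrix (Fin n) (Fin n) (MvPolynomial (Fin k) ℚ) :=
  fun i j =>
    if i.1 = n - 1 then
      if j.1 ≤ i.1 then C ((ω (i.1 - j.1) : ℚ)) * tQ k (i.1 - j.1) else 0
    else if j.1 ≤ i.1 then tQ k (i.1 - j.1)
    else if j.1 = i.1 + 1 then -1
    else 0


/-!
Expanding along the first row, and shifting the first column one step further at each
expansion, shows that the determinants `Dₙ` of these Hessenberg matrices satisfy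
`Dₙ₊₁ = ∑_{j<n} t_{j+1} D_{n-j} + ω_{n+1} t_{n+1}`. The polynomials `P_{ω,k,n}` satisfy the same
recursion: from `αᵢ · multinomial(α) = |α| · multinomial(α - eᵢ)` each coefficient of `P_{n+1}`
is the sum, over the parts `i+1` of `α`, of the coefficients of `α - eᵢ` in `P_{n-i}`; the
partitions with a single part contribute the term `ω_{n+1} t_{n+1}`.
-/

section Hessenberg

variable {R : Type*} [CommRing R] (a b : ℕ → R)

def hessenberg (n : ℕ) : Matrix (Fin n) (Fin n) R := fun i j =>
  if i.1 = n - 1 then (if j.1 ≤ i.1 then b (i.1 - j.1) else 0)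
  else if j.1 ≤ i.1 then a (i.1 - j.1)
  else if j.1 = i.1 + 1 then -1
  else 0

def hessenbergShiftCol (s n : ℕ) : Matrix (Fin n) (Fin n) R := fun i j =>
  if j.1 = 0 then (if i.1 = n - 1 then b (i.1 + s) else a (i.1 + s))
  else hessenberg a b n i j

lemma hessenbergShiftCol_zero (n : ℕ) : hessenbergShiftCol a b 0 n = hessenberg a b n := by
  ext i j
  by_cases hj : j.1 = 0 <;> simp [hessenbergShiftCol, hessenberg, hj]

lemma hessenberg_succ_succ {n : ℕ} (i j : Fin n) :
    hessenberg a b (n + 1) i.succ j.succ = hessenberg a b n i j := by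
  have last_row : i.1 + 1 = n ↔ i.1 = n - 1 := by omega
  simp only [hessenberg, Fin.val_succ, Nat.add_sub_cancel, Nat.add_sub_add_right,
    Nat.add_le_add_iff_right, Nat.add_right_cancel_iff, last_row]

lemma hessenbergShiftCol_succ_succ {s n : ℕ} (i j : Fin n) :
    hessenbergShiftCol a b s (n + 1) i.succ j.succ = hessenberg a b n i j := by
  simp [hessenbergShiftCol, hessenberg_succ_succ]

lemma det_hessenbergShiftCol_add_two (s n : ℕ) :
    (hessenbergShiftCol a b s (n + 2)).det =
      a s * (hessenberg a b (n + 1)).det + (hessenbergShiftCol a b (s + 1) (n + 1)).det := by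
  have minor_zero : (hessenbergShiftCol a b s (n + 2)).submatrix Fin.succ (Fin.succAbove 0) =
      hessenberg a b (n + 1) := by
    ext i j
    simp [hessenbergShiftCol_succ_succ]
  have minor_one : (hessenbergShiftCol a b s (n + 2)).submatrix Fin.succ (Fin.succAbove 1) =
      hessenbergShiftCol a b (s + 1) (n + 1) := by
    ext i j
    cases j using Fin.cases with
    | zero => simp [hessenbergShiftCol, add_assoc, add_comm 1 s]
    | succ j =>
      rw [Matrix.submatrix_apply, Fin.one_succAbove_succ, hessenbergShiftCol_succ_succ,
        hessenbergShiftCol, if_neg (by simp)]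
  rw [Matrix.det_succ_row_zero, Fintype.sum_eq_add 0 1 Fin.zero_ne_one, minor_zero, minor_one]
  · simp [hessenbergShiftCol, hessenberg]
  · rintro j ⟨hj0, hj1⟩
    have h0 : j.1 ≠ 0 := fun h => hj0 (Fin.ext h)
    have h1 : j.1 ≠ 1 := fun h => hj1 (Fin.ext h)
    simp [hessenbergShiftCol, hessenberg, h0, h1]

lemma det_hessenbergShiftCol (s n : ℕ) :
    (hessenbergShiftCol a b s (n + 1)).det =
      ∑ j ∈ range n, a (s + j) * (hessenberg a b (n - j)).det + b (s + n) := by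
  induction n generalizing s with
  | zero => simp [hessenbergShiftCol, add_comm]
  | succ n ih =>
    rw [det_hessenbergShiftCol_add_two, ih, sum_range_succ', add_zero, Nat.sub_zero]
    have shift (j : ℕ) : a (s + (j + 1)) * (hessenberg a b (n + 1 - (j + 1))).det =
        a (s + 1 + j) * (hessenberg a b (n - j)).det := by
      rw [Nat.add_sub_add_right, add_comm j, add_assoc]
    rw [sum_congr rfl fun j _ => shift j, add_right_comm s 1, ← add_assoc s]
    ring

lemma det_hessenberg_succ (n : ℕ) :
    (hessenberg a b (n + 1)).det = ∑ j ∈ range n, a j * (hessenberg a b (n - j)).det + b n := by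
  simpa [hessenbergShiftCol_zero] using det_hessenbergShiftCol a b 0 n

lemma det_hessenberg_eq_of_recurrence (f : ℕ → R)
    (hf : ∀ n, f (n + 1) = ∑ j ∈ range n, a j * f (n - j) + b n) (n : ℕ) :
    (hessenberg a b (n + 1)).det = f (n + 1) := by
  induction n using Nat.strong_induction_on with
  | _ n ih =>
    rw [det_hessenberg_succ, hf]
    congr 1
    refine sum_congr rfl fun j hj => ?_
    obtain ⟨m, hm⟩ : ∃ m, n - j = m + 1 := ⟨n - j - 1, by simp at hj; omega⟩
    rw [hm, ih m (by omega)]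

end Hessenberg

section Partitions

variable {k : ℕ}

def weight (α : Fin k → ℕ) : ℕ := ∑ j, (j.1 + 1) * α j

lemma mem_partitions {n : ℕ} {α : Fin k → ℕ} : α ∈ partitions k n ↔ weight α = n := by
  refine ⟨fun h => (mem_filter.mp h).2, fun h => mem_filter.mpr ⟨?_, h⟩⟩
  simp only [Fintype.mem_piFinset, mem_range]
  intro j
  have := single_le_sum (f := fun j : Fin k => (j.1 + 1) * α j) (fun _ _ => Nat.zero_le _)
    (mem_univ j)
  rw [← h, weight]
  nlinarith

lemma weight_add (α β : Fin k → ℕ) : weight (α + β) = weight α + weight β := by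
  simp [weight, mul_add, sum_add_distrib]

lemma weight_single (i : Fin k) : weight (Pi.single i 1) = i.1 + 1 := by
  simp [weight, Pi.single_apply]

lemma sum_le_weight (α : Fin k → ℕ) : ∑ j, α j ≤ weight α :=
  sum_le_sum fun j _ => Nat.le_mul_of_pos_left _ j.1.succ_pos

lemma single_one_le_iff {α : Fin k → ℕ} {i : Fin k} : Pi.single i 1 ≤ α ↔ α i ≠ 0 := by
  refine ⟨fun h => by simpa [Nat.one_le_iff_ne_zero] using h i, fun h j => ?_⟩
  rcases eq_or_ne j i with rfl | hj
  · simpa [Nat.one_le_iff_ne_zero] using h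
  · simp [hj]

lemma weight_sub_single_add {α : Fin k → ℕ} {i : Fin k} (h : α i ≠ 0) :
    weight (α - Pi.single i 1) + (i.1 + 1) = weight α := by
  rw [← weight_single, ← weight_add, tsub_add_cancel_of_le (single_one_le_iff.mpr h)]

lemma sum_partitions_sum_ne_zero {M : Type*} [AddCommMonoid M] (n : ℕ)
    (g : Fin k → (Fin k → ℕ) → M) :
    ∑ α ∈ partitions k n, ∑ i with α i ≠ 0, g i α =
      ∑ i with i.1 < n, ∑ β ∈ partitions k (n - (i.1 + 1)), g i (β + Pi.single i 1) := by
  rw [sum_comm' (t' := univ.filter fun i : Fin k => i.1 < n)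
    (s' := fun i => (partitions k n).filter (· i ≠ 0))]
  · refine sum_congr rfl fun i hi => ?_
    have hi : i.1 < n := (mem_filter.mp hi).2
    refine sum_nbij' (· - Pi.single i 1) (· + Pi.single i 1) ?_ ?_ ?_ ?_ ?_
    · intro α hα
      simp only [mem_filter, mem_partitions] at hα
      have := weight_sub_single_add hα.2
      rw [mem_partitions]
      omega
    · intro β hβ
      rw [mem_partitions] at hβ
      simp only [mem_filter, mem_partitions, weight_add, weight_single]
      refine ⟨by omega, by simp⟩
    · intro α hα
      exact tsub_add_cancel_of_le (single_one_le_iff.mpr (mem_filter.mp hα).2)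
    · intro β _
      exact add_tsub_cancel_right β _
    · intro α hα
      rw [tsub_add_cancel_of_le (single_one_le_iff.mpr (mem_filter.mp hα).2)]
  · intro α i
    simp only [mem_filter, mem_univ, true_and, mem_partitions]
    constructor
    · rintro ⟨hα, hi⟩
      have := weight_sub_single_add hi
      exact ⟨⟨hα, hi⟩, by omega⟩
    · exact fun ⟨h, _⟩ => h

end Partitions

lemma Nat.succ_mul_multinomial_add_single {ι : Type*} [Fintype ι] [DecidableEq ι]
    (β : ι → ℕ) (i : ι) :
    (β i + 1) * Nat.multinomial univ (β + Pi.single i 1) =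
      (∑ j, β j + 1) * Nat.multinomial univ β := by
  have split (f : ι → ℕ) : Nat.multinomial univ f =
      (f i + ∑ j ∈ univ.erase i, f j).choose (f i) * Nat.multinomial (univ.erase i) f := by
    rw [← Nat.multinomial_insert (notMem_erase i univ), insert_erase (mem_univ i)]
  have off_i : ∀ j ∈ univ.erase i, (β + Pi.single i 1 : ι → ℕ) j = β j := fun j hj => by
    simp [Finset.ne_of_mem_erase hj]
  rw [split, split, sum_congr rfl off_i, Nat.multinomial_congr off_i,
    ← add_sum_erase _ _ (mem_univ i)]
  simp only [Pi.add_apply, Pi.single_eq_same]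
  rw [add_right_comm (β i) 1, ← mul_assoc, ← mul_assoc, mul_comm (β i + 1),
    ← Nat.add_one_mul_choose_eq]

section IsobaricCoefficients

variable {k : ℕ}

noncomputable def isobaricCoeff (ω : ℕ → ℤ) (α : Fin k → ℕ) : ℚ :=
  (Nat.multinomial univ α : ℚ) *
    ((∑ i : Fin k, (α i : ℚ) * (ω i.1 : ℚ)) / ((∑ i, α i : ℕ) : ℚ))

lemma P_eq_sum_isobaricCoeff (ω : ℕ → ℤ) (n : ℕ) :
    P k ω n = ∑ α ∈ partitions k n, C (isobaricCoeff ω α) * ∏ j, X j ^ α j := rfl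

/-- For `|α| = 1` both sides are `0`, through division by zero. -/
lemma isobaricCoeff_sub_single (ω : ℕ → ℤ) {α : Fin k → ℕ} {i : Fin k} (h : α i ≠ 0) :
    isobaricCoeff ω (α - Pi.single i 1) =
      α i * Nat.multinomial univ α * (∑ j, (α j : ℚ) * ω j - ω i) /
        ((∑ j, α j : ℕ) * ((∑ j, α j : ℕ) - 1)) := by
  obtain ⟨β, rfl⟩ : ∃ β : Fin k → ℕ, α = β + Pi.single i 1 :=
    ⟨_, (tsub_add_cancel_of_le (single_one_le_iff.mpr h)).symm⟩
  have key : ((β i + 1 : ℕ) : ℚ) * Nat.multinomial univ (β + Pi.single i 1) =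
      ((∑ j, β j + 1 : ℕ) : ℚ) * Nat.multinomial univ β := by
    exact_mod_cast Nat.succ_mul_multinomial_add_single β i
  simp only [isobaricCoeff, add_tsub_cancel_right, Pi.add_apply, sum_add_distrib, add_mul,
    Pi.single_apply, Nat.cast_add, Nat.cast_ite, Nat.cast_one, Nat.cast_zero, ite_mul, one_mul,
    zero_mul, Fintype.sum_ite_eq', ↓reduceIte] at key ⊢
  field_simp
  congr 1
  linear_combination -(∑ x, (β x : ℚ) * ω x) * key

lemma isobaricCoeff_eq_sum_sub_single (ω : ℕ → ℤ) {α : Fin k → ℕ} (hα : 2 ≤ ∑ j, α j) :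
    isobaricCoeff ω α = ∑ i with α i ≠ 0, isobaricCoeff ω (α - Pi.single i 1) := by
  have h2 : (2 : ℚ) ≤ ((∑ j, α j : ℕ) : ℚ) := by exact_mod_cast hα
  set N : ℚ := ((∑ j, α j : ℕ) : ℚ)
  set S : ℚ := ∑ j, (α j : ℚ) * ω j
  set M : ℚ := (Nat.multinomial univ α : ℚ)
  have hN : N ≠ 0 := by linarith
  have hN1 : N - 1 ≠ 0 := by linarith
  calc isobaricCoeff ω α = M * (N * S - S) / (N * (N - 1)) := by
        rw [isobaricCoeff]
        field_simp
        ring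
    _ = ∑ i, α i * M * (S - ω i) / (N * (N - 1)) := by
        rw [← sum_div]
        congr 1
        simp only [N, Nat.cast_sum, sum_mul, mul_sub, sum_sub_distrib, S]
        rw [mul_sum, mul_sum]
        congr 1 <;> exact sum_congr rfl fun _ _ => by ring
    _ = ∑ i with α i ≠ 0, isobaricCoeff ω (α - Pi.single i 1) := by
        rw [sum_filter]
        refine sum_congr rfl fun i _ => ?_
        split_ifs with hi
        · exact (isobaricCoeff_sub_single ω hi).symm
        · simp [not_not.mp hi]

lemma isobaricCoeff_single (ω : ℕ → ℤ) (i : Fin k) :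
    isobaricCoeff ω (Pi.single i 1) = ω i := by
  simp [isobaricCoeff, Nat.multinomial_single, Pi.single_apply]

/-- The correction term handles `α = eᵢ`, where the recursion would otherwise meet the junk
value `isobaricCoeff ω 0 = 0/0 = 0`. -/
lemma isobaricCoeff_eq_sum (ω : ℕ → ℤ) {α : Fin k → ℕ} (hα : α ≠ 0) :
    isobaricCoeff ω α = ∑ i with α i ≠ 0,
      (isobaricCoeff ω (α - Pi.single i 1) + if α - Pi.single i 1 = 0 then (ω i : ℚ) else 0) := by
  rcases le_or_gt 2 (∑ j, α j) with h2 | h1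
  · rw [sum_add_distrib, ← isobaricCoeff_eq_sum_sub_single ω h2, sum_eq_zero, add_zero]
    intro i hi
    refine if_neg fun h0 => ?_
    have : α = Pi.single i 1 :=
      le_antisymm (tsub_eq_zero_iff_le.mp h0) (single_one_le_iff.mpr (mem_filter.mp hi).2)
    simp [this] at h2
  · obtain ⟨i, hi⟩ := Function.ne_iff.mp hα
    obtain ⟨β, rfl⟩ : ∃ β : Fin k → ℕ, α = β + Pi.single i 1 :=
      ⟨_, (tsub_add_cancel_of_le (single_one_le_iff.mpr hi)).symm⟩
    obtain rfl : β = 0 := by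
      simp only [Pi.add_apply, sum_add_distrib, Pi.single_apply, Fintype.sum_ite_eq'] at h1
      ext j
      exact (sum_eq_zero_iff.mp (by omega) : ∀ j ∈ univ, β j = 0) j (mem_univ j)
    have hsupp : ({j | (Pi.single i 1 : Fin k → ℕ) j ≠ 0} : Finset (Fin k)) = {i} := by
      ext j
      simp [Pi.single_apply]
    rw [zero_add, hsupp, sum_singleton, tsub_self, if_pos rfl, isobaricCoeff_single]
    simp [isobaricCoeff]

lemma prod_X_pow_add_single {R : Type*} [CommSemiring R] (β : Fin k → ℕ) (i : Fin k) :
    ∏ j, (X j : MvPolynomial (Fin k) R) ^ (β + Pi.single i 1 : Fin k → ℕ) j =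
      X i * ∏ j, X j ^ β j := by
  simp only [Pi.add_apply, pow_add, prod_mul_distrib, Pi.single_apply, pow_ite, pow_one, pow_zero,
    prod_ite_eq', mem_univ, if_true, mul_comm]

lemma P_zero (ω : ℕ → ℤ) : P k ω 0 = 0 := by
  refine sum_eq_zero fun α hα => ?_
  have : ∑ j, α j = 0 := Nat.eq_zero_of_le_zero (mem_partitions.mp hα ▸ sum_le_weight α)
  simp [this]

lemma sum_partitions_isobaricCoeff_add_ite (ω : ℕ → ℤ) (i : Fin k) (m : ℕ) :
    ∑ β ∈ partitions k m,
        C (isobaricCoeff ω β + if β = 0 then (ω i : ℚ) else 0) * ∏ j, X j ^ β j =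
      P k ω m + if m = 0 then C (ω i : ℚ) else 0 := by
  simp only [map_add, add_mul, sum_add_distrib, apply_ite C, map_zero, ite_mul, zero_mul,
    sum_ite_eq', mem_partitions]
  simp [P_eq_sum_isobaricCoeff, weight, eq_comm]

lemma sum_range_tQ_mul (m : ℕ) (F : ℕ → MvPolynomial (Fin k) ℚ) :
    ∑ j ∈ range m, tQ k j * F j = ∑ i : Fin k with i.1 < m, X i * F i := by
  have hX (i : Fin k) : (X i : MvPolynomial (Fin k) ℚ) = tQ k i := by simp [tQ]
  simp_rw [hX]
  rw [sum_filter, Fin.sum_univ_eq_sum_range (fun j => if j < m then tQ k j * F j else 0),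
    ← sum_filter, ← sum_filter_of_ne (p := (· < k)) fun j _ h => ?_]
  · congr 1
    ext j
    simp only [mem_filter, mem_range]
    omega
  · by_contra hj
    simp [tQ, hj] at h

lemma P_succ (ω : ℕ → ℤ) (n : ℕ) :
    P k ω (n + 1) = ∑ j ∈ range n, tQ k j * P k ω (n - j) + C (ω n : ℚ) * tQ k n := by
  calc P k ω (n + 1)
      = ∑ α ∈ partitions k (n + 1), ∑ i with α i ≠ 0,
          C (isobaricCoeff ω (α - Pi.single i 1) +
            if α - Pi.single i 1 = 0 then (ω i : ℚ) else 0) * ∏ j, X j ^ α j := by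
        rw [P_eq_sum_isobaricCoeff]
        refine sum_congr rfl fun α hα => ?_
        have : α ≠ 0 := by
          rintro rfl
          simp [mem_partitions, weight] at hα
        rw [isobaricCoeff_eq_sum ω this, map_sum, sum_mul]
    _ = ∑ i : Fin k with i.1 < n + 1,
          X i * (P k ω (n - i) + if n - i = 0 then C (ω i : ℚ) else 0) := by
        rw [sum_partitions_sum_ne_zero]
        refine sum_congr rfl fun i _ => ?_
        simp only [add_tsub_cancel_right, prod_X_pow_add_single, Nat.add_sub_add_right,
          ← sum_partitions_isobaricCoeff_add_ite, mul_sum]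
        exact sum_congr rfl fun _ _ => by ring
    _ = ∑ j ∈ range (n + 1),
          tQ k j * (P k ω (n - j) + if n - j = 0 then C (ω j : ℚ) else 0) :=
        (sum_range_tQ_mul (n + 1) fun j =>
          P k ω (n - j) + if n - j = 0 then C (ω j : ℚ) else 0).symm
    _ = ∑ j ∈ range n, tQ k j * P k ω (n - j) + C (ω n : ℚ) * tQ k n := by
        rw [sum_range_succ, Nat.sub_self, P_zero, if_pos rfl, zero_add, mul_comm (tQ k n)]
        congr 1
        refine sum_congr rfl fun j hj => ?_
        rw [if_neg (by simp at hj; omega), add_zero]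

end IsobaricCoefficients

lemma Hminus_eq_hessenberg (k n : ℕ) (ω : ℕ → ℤ) :
    Hminus k n ω = hessenberg (tQ k) (fun m => C (ω m : ℚ) * tQ k m) n := rfl

theorem det_Hminus_eq_P_general (k n : ℕ) (hn : 1 ≤ n) (ω : ℕ → ℤ) :
    (Hminus k n ω).det = P k ω n := by
  obtain ⟨n, rfl⟩ := Nat.exists_eq_add_of_le' hn
  rw [Hminus_eq_hessenberg]
  exact det_hessenberg_eq_of_recurrence _ _ (P k ω) (P_succ ω) n

theorem det_Hminus_eq_P (k n : ℕ) (hk : 1 ≤ k) (hn : 1 ≤ n) (ω : ℕ → ℤ) :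
    (Hminus k n ω).det = P k ω n :=
  det_Hminus_eq_P_general k n hn ω
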